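/- Let k be a commutative noetherian ring, A a k-algebra which is flat as a k-module, M a left A-module, (F_i)_{i∈I} a family of rank one free right A-modules, and P a projective A ⊗_k Aᵒᵖ-module. Then the canonical morphism P ⊗_{A ⊗_k Aᵒᵖ} (M ⊗_k ∏_{i∈I} F_i) → ∏_{i∈I} (P ⊗_{A ⊗_k Aᵒᵖ} (M ⊗_k F_i)) is injective. -/

import Mathlib

open TensorProduct MulOpposite CategoryTheory

universe u v w x

set_option linter.unusedSectionVars false
set_option linter.unusedVariables false

noncomputable section

section BimoduleTensor
variable (k : Type u) (A : Type v) [CommRing k] [Ring A] [Algebra k A]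
variable (M : Type w) [AddCommGroup M] [Module k M] [Module A M] [IsScalarTower k A M]
variable (N : Type w') [AddCommGroup N] [Module k N] [Module Aᵐᵒᵖ N] [IsScalarTower k Aᵐᵒᵖ N]

/-- Right `A`-action on `M ⊗[k] N` through the second factor. -/
def rightEnd : Aᵐᵒᵖ →+* Module.End k (M ⊗[k] N) where
  toFun a := LinearMap.lTensor M ((Algebra.lsmul k k N) a)
  map_one' := by (try dsimp only); rw [map_one]; exact LinearMap.lTensor_id M N
  map_mul' a b := by (try dsimp only); rw [map_mul]; exact LinearMap.lTensor_comp M _ _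
  map_zero' := by (try dsimp only); rw [map_zero]; exact LinearMap.lTensor_zero M
  map_add' a b := by (try dsimp only); rw [map_add]; exact LinearMap.lTensor_add M _ _

/-- `M ⊗[k] N` as a module over `Aᵐᵒᵖ` (through the second factor). -/
def tensorRightModule : Module Aᵐᵒᵖ (M ⊗[k] N) := Module.compHom _ (rightEnd k A M N)

theorem tensorRightModule_smul_tmul (a : Aᵐᵒᵖ) (m : M) (n : N) :
    letI := tensorRightModule k A M N
    a • (m ⊗ₜ[k] n) = m ⊗ₜ[k] (a • n) := rfl

theorem tensorRightModule_isScalarTower :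
    letI := tensorRightModule k A M N
    IsScalarTower k Aᵐᵒᵖ (M ⊗[k] N) := by
  letI := tensorRightModule k A M N
  constructor
  intro c a x
  induction x using TensorProduct.induction_on with
  | zero => simp only [smul_zero]
  | tmul m n =>
      rw [tensorRightModule_smul_tmul, tensorRightModule_smul_tmul, smul_assoc, tmul_smul]
  | add x y hx hy => rw [smul_add, smul_add, smul_add, hx, hy]

theorem tensorRightModule_smulCommClass :
    letI := tensorRightModule k A M N
    SMulCommClass A Aᵐᵒᵖ (M ⊗[k] N) := by
  letI := tensorRightModule k A M N
  constructor
  intro a b x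
  induction x using TensorProduct.induction_on with
  | zero => simp only [smul_zero]
  | tmul m n =>
      rw [tensorRightModule_smul_tmul, smul_tmul', smul_tmul', tensorRightModule_smul_tmul]
  | add x y hx hy => rw [smul_add, smul_add, smul_add, smul_add, hx, hy]

/-- The `k`-central `A`-bimodule structure on `M ⊗[k] N`, as a module over the enveloping
algebra `A ⊗[k] Aᵐᵒᵖ`: here `A` acts on the left factor and `Aᵐᵒᵖ` on the right factor. -/
def bimoduleTensorModule : Module (A ⊗[k] Aᵐᵒᵖ) (M ⊗[k] N) :=
  letI := tensorRightModule k A M N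
  haveI := tensorRightModule_isScalarTower k A M N
  haveI := tensorRightModule_smulCommClass k A M N
  TensorProduct.Algebra.module

theorem bimoduleTensorModule_smul_tmul (a b : A) (m : M) (n : N) :
    letI := bimoduleTensorModule k A M N
    (a ⊗ₜ[k] (op b)) • (m ⊗ₜ[k] n) = (a • m) ⊗ₜ[k] ((op b) • n) := by
  letI := tensorRightModule k A M N
  letI := bimoduleTensorModule k A M N
  show (a • ((op b) • (m ⊗ₜ[k] n))) = (a • m) ⊗ₜ[k] ((op b) • n)
  rw [tensorRightModule_smul_tmul, smul_tmul']
end BimoduleTensor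

section BalTensor
variable (A : Type u) [Ring A]
variable (N : Type v) [AddCommGroup N] [Module Aᵐᵒᵖ N]
variable (M : Type w) [AddCommGroup M] [Module A M]

/-- The relations defining the balanced tensor product `N ⊗_A M` of a right `A`-module `N`
and a left `A`-module `M`. -/
def balRels : Submodule ℤ (N ⊗[ℤ] M) :=
  Submodule.span ℤ
    {x | ∃ (a : A) (n : N) (m : M), x = ((op a) • n) ⊗ₜ[ℤ] m - n ⊗ₜ[ℤ] (a • m)}

/-- The balanced tensor product `N ⊗_A M` of a right `A`-module `N` and a left `A`-module `M`,
defined as the quotient of `N ⊗[ℤ] M` by the submodule of balancing relations. -/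
abbrev BalTensor := (N ⊗[ℤ] M) ⧸ balRels A N M

variable {M}

/-- The functorial map `N ⊗_A M → N ⊗_A M'` induced by an `A`-linear map `M → M'`. -/
def balMap {M' : Type x} [AddCommGroup M'] [Module A M'] (f : M →ₗ[A] M') :
    BalTensor A N M →ₗ[ℤ] BalTensor A N M' :=
  Submodule.mapQ (balRels A N M) (balRels A N M')
    (LinearMap.lTensor N f.toAddMonoidHom.toIntLinearMap)
    (by
      rw [balRels, Submodule.span_le]
      rintro x ⟨a, n, m, rfl⟩
      change (LinearMap.lTensor N f.toAddMonoidHom.toIntLinearMap)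
        (((op a) • n) ⊗ₜ[ℤ] m - n ⊗ₜ[ℤ] (a • m)) ∈ balRels A N M'
      rw [map_sub, LinearMap.lTensor_tmul, LinearMap.lTensor_tmul]
      have hsm : f.toAddMonoidHom.toIntLinearMap (a • m) = a • (f.toAddMonoidHom.toIntLinearMap m) := by
        simp [LinearMap.map_smul]
      rw [hsm]
      exact Submodule.subset_span ⟨a, n, f.toAddMonoidHom.toIntLinearMap m, rfl⟩)

variable {N} (M)

/-- The functorial map `N ⊗_A M → N' ⊗_A M` induced by a map `N → N'` of right `A`-modules. -/
def balMapLeft {N' : Type x} [AddCommGroup N'] [Module Aᵐᵒᵖ N'] (g : N →ₗ[Aᵐᵒᵖ] N') :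
    BalTensor A N M →ₗ[ℤ] BalTensor A N' M :=
  Submodule.mapQ (balRels A N M) (balRels A N' M)
    (LinearMap.rTensor M g.toAddMonoidHom.toIntLinearMap)
    (by
      rw [balRels, Submodule.span_le]
      rintro x ⟨a, n, m, rfl⟩
      change (LinearMap.rTensor M g.toAddMonoidHom.toIntLinearMap)
        (((op a) • n) ⊗ₜ[ℤ] m - n ⊗ₜ[ℤ] (a • m)) ∈ balRels A N' M
      rw [map_sub, LinearMap.rTensor_tmul, LinearMap.rTensor_tmul]
      have hsm : g.toAddMonoidHom.toIntLinearMap ((op a) • n)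
          = (op a) • (g.toAddMonoidHom.toIntLinearMap n) := by
        simp [LinearMap.map_smul]
      rw [hsm]
      exact Submodule.subset_span ⟨a, g.toAddMonoidHom.toIntLinearMap n, m, rfl⟩)

variable (N)

/-- A right `A`-module `N` is *flat* if the functor `N ⊗_A (−)` is exact on left `A`-modules. -/
def RightFlat : Prop :=
  ∀ (M₁ M₂ M₃ : Type u) [AddCommGroup M₁] [Module A M₁] [AddCommGroup M₂] [Module A M₂]
    [AddCommGroup M₃] [Module A M₃] (f : M₁ →ₗ[A] M₂) (g : M₂ →ₗ[A] M₃),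
    Function.Exact f g → Function.Exact (balMap A N f) (balMap A N g)

/-- The canonical comparison map `(∏ᵢ Fᵢ) ⊗_A M → ∏ᵢ (Fᵢ ⊗_A M)` induced by the
projections `∏ᵢ Fᵢ → Fᵢ`. -/
def balPiCompare {I : Type x} (F : I → Type v) [∀ i, AddCommGroup (F i)]
    [∀ i, Module Aᵐᵒᵖ (F i)] :
    BalTensor A (∀ i, F i) M →ₗ[ℤ] ∀ i, BalTensor A (F i) M :=
  LinearMap.pi fun i => balMapLeft A M (LinearMap.proj i : (∀ j, F j) →ₗ[Aᵐᵒᵖ] F i)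

instance BalTensor.instAddCommGroup : AddCommGroup (BalTensor A N M) :=
  Submodule.Quotient.addCommGroup _

instance BalTensor.instModuleInt : Module ℤ (BalTensor A N M) :=
  Submodule.Quotient.module _

end BalTensor

section BimodProj
variable (k : Type u) (A : Type u) [CommRing k] [Ring A] [Algebra k A]
variable (M : Type u) [AddCommGroup M] [Module k M] [Module A M] [IsScalarTower k A M]
variable {I : Type u} (F : I → Type u) [∀ i, AddCommGroup (F i)] [∀ i, Module k (F i)]
  [∀ i, Module Aᵐᵒᵖ (F i)] [∀ i, IsScalarTower k Aᵐᵒᵖ (F i)]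

/-- The map `M ⊗[k] (∏ⱼ Fⱼ) → M ⊗[k] Fᵢ` induced by the `i`-th projection, as a morphism of
modules over the enveloping algebra `A ⊗[k] Aᵐᵒᵖ`. -/
def bimodPiProj (i : I) :
    letI := bimoduleTensorModule k A M (∀ j, F j)
    letI := bimoduleTensorModule k A M (F i)
    (M ⊗[k] (∀ j, F j)) →ₗ[A ⊗[k] Aᵐᵒᵖ] (M ⊗[k] F i) :=
  letI := bimoduleTensorModule k A M (∀ j, F j)
  letI := bimoduleTensorModule k A M (F i)
  { toFun := LinearMap.lTensor M (LinearMap.proj i : (∀ j, F j) →ₗ[k] F i)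
    map_add' := map_add _
    map_smul' := by
      intro e x
      dsimp only [RingHom.id_apply]
      induction e using TensorProduct.induction_on with
      | zero => exact (congrArg _ (zero_smul (A ⊗[k] Aᵐᵒᵖ) x)).trans (((LinearMap.lTensor M (LinearMap.proj i : (∀ j, F j) →ₗ[k] F i)).map_zero).trans (zero_smul (A ⊗[k] Aᵐᵒᵖ)
            (LinearMap.lTensor M (LinearMap.proj i : (∀ j, F j) →ₗ[k] F i) x)).symm)
      | tmul a b =>
          induction b using MulOpposite.rec' with
          | _ b =>
            induction x using TensorProduct.induction_on with
            | zero => simp only [smul_zero, map_zero]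
            | tmul m g => rfl
            | add x y hx hy => rw [smul_add, map_add, hx, hy, map_add, smul_add]
      | add e f he hf => rw [add_smul, map_add, he, hf, add_smul] }
end BimodProj

/-!
A projective right module `D` over a ring `R` is a direct summand of a free module, and
`(J →₀ R) ⊗_R X ≅ J →₀ X` naturally in `X`; hence `D ⊗_R (-)` carries a jointly injective
family of maps `X → Yᵢ` to a jointly injective family. Over `R = A ⊗[k] Aᵐᵒᵖ` this reduces the
theorem to the injectivity of `M ⊗[k] ∏ᵢ Fᵢ → ∏ᵢ (M ⊗[k] Fᵢ)`. Every element of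
`M ⊗[k] ∏ᵢ Fᵢ` comes from `M' ⊗[k] ∏ᵢ Fᵢ` for a finitely generated `M' ⊆ M`, and each
`M' ⊗[k] Fᵢ → M ⊗[k] Fᵢ` is injective because `Fᵢ ≅ A` is `k`-flat, so it suffices to treat `M'`.
Over the noetherian ring `k`, `M'` is finitely presented; for `kⁿ` the comparison map is
bijective, and the four lemma applied to a presentation `kᵐ → kⁿ → M' → 0` finishes the proof.
-/

theorem Function.Exact.pi_map {ι : Type*} {X Y Z : ι → Type*} [∀ i, Zero (Z i)]
    {f : ∀ i, X i → Y i} {g : ∀ i, Y i → Z i} (h : ∀ i, Function.Exact (f i) (g i)) :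
    Function.Exact (Pi.map f) (Pi.map g) := by
  intro y
  simp only [Set.mem_range, funext_iff, Pi.map_apply, Pi.zero_apply]
  refine ⟨fun hy => ?_, ?_⟩
  · choose x hx using fun i => (h i (y i)).mp (hy i)
    exact ⟨x, hx⟩
  · rintro ⟨x, hx⟩ i
    rw [← hx i]
    exact (h i).apply_apply_eq_zero (x i)

section PiRightHom

open LinearMap

variable (k : Type*) [CommRing k] {I : Type*} (N : I → Type*) [∀ i, AddCommGroup (N i)]
  [∀ i, Module k (N i)]

theorem piRightHom_comp_rTensor {M₁ M₂ : Type*} [AddCommGroup M₁] [Module k M₁]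
    [AddCommGroup M₂] [Module k M₂] (f : M₁ →ₗ[k] M₂) :
    piRightHom k k M₂ N ∘ₗ rTensor _ f = piMap (fun i => rTensor (N i) f) ∘ₗ piRightHom k k M₁ N :=
  TensorProduct.ext' fun _ _ => rfl

theorem proj_comp_piRightHom (M : Type*) [AddCommGroup M] [Module k M] (i : I) :
    proj i ∘ₗ piRightHom k k M N = lTensor M (proj i) :=
  TensorProduct.ext' fun _ _ => rfl

theorem piRightHom_bijective_of_fin (n : ℕ) :
    Function.Bijective (piRightHom k k (Fin n → k) N) := by
  let swap : (Fin n → ∀ i, N i) ≃ₗ[k] ∀ i, Fin n → N i :=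
    { Equiv.piComm _ with map_add' := fun _ _ => rfl, map_smul' := fun _ _ => rfl }
  let e : (Fin n → k) ⊗[k] (∀ i, N i) ≃ₗ[k] ∀ i, (Fin n → k) ⊗[k] N i :=
    TensorProduct.comm k _ _ ≪≫ₗ piScalarRight k k _ (Fin n) ≪≫ₗ swap ≪≫ₗ
      LinearEquiv.piCongrRight fun i =>
        (piScalarRight k k (N i) (Fin n)).symm ≪≫ₗ TensorProduct.comm k _ _
  suffices piRightHom k k (Fin n → k) N = e.toLinearMap from this ▸ e.bijective
  refine TensorProduct.ext' fun v p => funext fun i => ?_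
  have h : piScalarRight k k (N i) (Fin n) (p i ⊗ₜ v) = fun t => v t • p i := by
    simp [piScalarRight_apply]
  simp only [e, LinearEquiv.coe_coe, LinearEquiv.trans_apply, TensorProduct.comm_tmul,
    LinearEquiv.piCongrRight_apply, piRightHom_tmul]
  change _ = TensorProduct.comm k _ _ ((piScalarRight k k (N i) (Fin n)).symm (fun t => v t • p i))
  rw [← h, LinearEquiv.symm_apply_apply, TensorProduct.comm_tmul]

theorem piRightHom_injective_of_finitePresentation (M : Type*) [AddCommGroup M] [Module k M]
    [Module.FinitePresentation k M] :
    Function.Injective (piRightHom k k M N) := by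
  obtain ⟨n, m, π, ρ, hπ, hρπ⟩ := Module.FinitePresentation.exists_fin' k M
  exact injective_of_surjective_of_injective_of_right_exact
    (rTensor _ ρ) (rTensor _ π) (piMap fun i => rTensor (N i) ρ) (piMap fun i => rTensor (N i) π)
    (piRightHom k k _ N) (piRightHom k k _ N) (piRightHom k k M N)
    (piRightHom_comp_rTensor k N ρ).symm (piRightHom_comp_rTensor k N π).symm
    (rTensor_exact _ hρπ hπ)
    (by rw [coe_piMap, coe_piMap]; exact Function.Exact.pi_map fun i => rTensor_exact _ hρπ hπ)
    (piRightHom_bijective_of_fin k N m).2 (piRightHom_bijective_of_fin k N n).1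
    (rTensor_surjective _ hπ)

theorem piRightHom_injective_of_flat [IsNoetherianRing k] [∀ i, Module.Flat k (N i)]
    (M : Type*) [AddCommGroup M] [Module k M] :
    Function.Injective (piRightHom k k M N) := by
  refine (injective_iff_map_eq_zero _).mpr fun x hx => ?_
  obtain ⟨M', _, hM'⟩ := exists_finite_submodule_left_of_setFinite {x} (Set.finite_singleton x)
  obtain ⟨x', rfl⟩ := hM' rfl
  have : Module.FinitePresentation k M' := Module.finitePresentation_of_finite k M'
  have hinj : Function.Injective (piRightHom k k M N ∘ₗ rTensor _ M'.subtype) := by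
    rw [piRightHom_comp_rTensor, coe_comp, coe_piMap]
    exact (Function.Injective.piMap fun i => Module.Flat.rTensor_preserves_injective_linearMap
      M'.subtype M'.injective_subtype).comp (piRightHom_injective_of_finitePresentation k N M')
  rw [hinj (hx.trans (map_zero _).symm), map_zero]

end PiRightHom

section BalTensor

variable (A : Type*) [Ring A] {N : Type*} [AddCommGroup N] [Module Aᵐᵒᵖ N]
  {M : Type*} [AddCommGroup M] [Module A M]

theorem balMk_op_smul_tmul (a : A) (n : N) (m : M) :
    (Submodule.Quotient.mk ((op a • n) ⊗ₜ m) : BalTensor A N M) =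
      Submodule.Quotient.mk (n ⊗ₜ (a • m)) :=
  (Submodule.Quotient.eq _).mpr (Submodule.subset_span ⟨a, n, m, rfl⟩)

theorem balMap_comp_balMapLeft {M' : Type*} [AddCommGroup M'] [Module A M']
    {N' : Type*} [AddCommGroup N'] [Module Aᵐᵒᵖ N'] (f : M →ₗ[A] M') (g : N →ₗ[Aᵐᵒᵖ] N') :
    balMap A N' f ∘ₗ balMapLeft A M g = balMapLeft A M' g ∘ₗ balMap A N f :=
  Submodule.linearMap_qext _ (TensorProduct.ext' fun _ _ => rfl)

theorem balMapLeft_comp {N' N'' : Type*} [AddCommGroup N'] [Module Aᵐᵒᵖ N']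
    [AddCommGroup N''] [Module Aᵐᵒᵖ N''] (g₁ : N →ₗ[Aᵐᵒᵖ] N') (g₂ : N' →ₗ[Aᵐᵒᵖ] N'') :
    balMapLeft A M (g₂ ∘ₗ g₁) = balMapLeft A M g₂ ∘ₗ balMapLeft A M g₁ :=
  Submodule.linearMap_qext _ (TensorProduct.ext' fun _ _ => rfl)

theorem balMapLeft_id : balMapLeft A M (LinearMap.id : N →ₗ[Aᵐᵒᵖ] N) = LinearMap.id :=
  Submodule.linearMap_qext _ (TensorProduct.ext' fun _ _ => rfl)

theorem balMapLeft_injective_of_leftInverse {N' : Type*} [AddCommGroup N'] [Module Aᵐᵒᵖ N']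
    {g : N →ₗ[Aᵐᵒᵖ] N'} {r : N' →ₗ[Aᵐᵒᵖ] N} (h : Function.LeftInverse r g) :
    Function.Injective (balMapLeft A M g) := by
  refine Function.LeftInverse.injective (g := balMapLeft A M r) fun x => ?_
  rw [← LinearMap.comp_apply, ← balMapLeft_comp, show r ∘ₗ g = LinearMap.id from LinearMap.ext h,
    balMapLeft_id, LinearMap.id_apply]

variable (J : Type*)

def unopSmulBilin : Aᵐᵒᵖ →ₗ[ℤ] M →ₗ[ℤ] M :=
  LinearMap.mk₂ ℤ (fun r m => r.unop • m) (fun _ _ _ => add_smul ..)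
    (fun _ _ _ => by rw [unop_smul, smul_assoc]) (fun _ _ _ => smul_add ..)
    (fun _ _ _ => smul_comm ..)

def finsuppUnopSmul : (J →₀ Aᵐᵒᵖ) ⊗[ℤ] M →ₗ[ℤ] (J →₀ M) :=
  TensorProduct.lift (Finsupp.lsum ℤ fun j => (unopSmulBilin A).compr₂ (Finsupp.lsingle j))

theorem finsuppUnopSmul_single_tmul (j : J) (r : Aᵐᵒᵖ) (m : M) :
    finsuppUnopSmul A J (Finsupp.single j r ⊗ₜ m) = Finsupp.single j (r.unop • m) := by
  -- `erw`: the two `ℤ`-module structures on `J →₀ M` agree only up to unfolding.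
  erw [finsuppUnopSmul, TensorProduct.lift.tmul]
  simp [unopSmulBilin]

def balFinsuppScalarLeft : BalTensor A (J →₀ Aᵐᵒᵖ) M →ₗ[ℤ] (J →₀ M) :=
  Submodule.liftQ _ (finsuppUnopSmul A J) (by
    rw [balRels, Submodule.span_le]
    rintro _ ⟨a, f, m, rfl⟩
    change finsuppUnopSmul A J ((op a • f) ⊗ₜ m - f ⊗ₜ (a • m)) = 0
    rw [map_sub, sub_eq_zero]
    induction f using Finsupp.induction_linear with
    | zero => simp
    | add f g hf hg => simp only [smul_add, TensorProduct.add_tmul, map_add, hf, hg]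
    | single j r =>
      rw [Finsupp.smul_single, finsuppUnopSmul_single_tmul, finsuppUnopSmul_single_tmul,
        smul_eq_mul, unop_mul, unop_op, mul_smul])

def balFinsuppScalarLeftInv : (J →₀ M) →ₗ[ℤ] BalTensor A (J →₀ Aᵐᵒᵖ) M :=
  Finsupp.lsum ℤ fun j => (balRels A _ M).mkQ ∘ₗ TensorProduct.mk ℤ _ M (Finsupp.single j 1)

theorem balFinsuppScalarLeftInv_single (j : J) (m : M) :
    balFinsuppScalarLeftInv A J (Finsupp.single j m) =
      Submodule.Quotient.mk (Finsupp.single j 1 ⊗ₜ m) :=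
  Finsupp.lsum_single ..

theorem balFinsuppScalarLeftInv_comp_balFinsuppScalarLeft :
    balFinsuppScalarLeftInv A J ∘ₗ balFinsuppScalarLeft A J =
      (LinearMap.id : BalTensor A (J →₀ Aᵐᵒᵖ) M →ₗ[ℤ] _) := by
  ext j r m
  change balFinsuppScalarLeftInv A J (finsuppUnopSmul A J (Finsupp.single j r ⊗ₜ m)) =
    Submodule.Quotient.mk (Finsupp.single j r ⊗ₜ m)
  rw [finsuppUnopSmul_single_tmul, balFinsuppScalarLeftInv_single, ← balMk_op_smul_tmul,
    Finsupp.smul_single, smul_eq_mul, mul_one, op_unop]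

theorem balFinsuppScalarLeft_injective :
    Function.Injective (balFinsuppScalarLeft A J (M := M)) :=
  Function.LeftInverse.injective (g := balFinsuppScalarLeftInv A J)
    (LinearMap.congr_fun (balFinsuppScalarLeftInv_comp_balFinsuppScalarLeft A J))

theorem balFinsuppScalarLeft_comp_balMap {M' : Type*} [AddCommGroup M'] [Module A M']
    (f : M →ₗ[A] M') :
    balFinsuppScalarLeft A J ∘ₗ balMap A _ f =
      Finsupp.mapRange.linearMap (f.restrictScalars ℤ) ∘ₗ balFinsuppScalarLeft A J := by
  ext j r m : 5
  change finsuppUnopSmul A J (Finsupp.single j r ⊗ₜ f m) =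
    Finsupp.mapRange f f.map_zero (finsuppUnopSmul A J (Finsupp.single j r ⊗ₜ m))
  rw [finsuppUnopSmul_single_tmul, finsuppUnopSmul_single_tmul, Finsupp.mapRange_single, map_smul]

theorem balMap_pi_injective_of_free {X : Type*} [AddCommGroup X] [Module A X] {ι : Type*}
    {Y : ι → Type*} [∀ i, AddCommGroup (Y i)] [∀ i, Module A (Y i)] (f : ∀ i, X →ₗ[A] Y i)
    (hf : Function.Injective (LinearMap.pi f)) :
    Function.Injective (LinearMap.pi fun i => balMap A (J →₀ Aᵐᵒᵖ) (f i)) := by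
  refine (injective_iff_map_eq_zero _).mpr fun x hx => balFinsuppScalarLeft_injective A J ?_
  ext j
  have hfx : ∀ i, f i (balFinsuppScalarLeft A J x j) = 0 := fun i => by
    have := DFunLike.congr_fun
      (LinearMap.congr_fun (balFinsuppScalarLeft_comp_balMap A J (f i)) x) j
    rwa [LinearMap.comp_apply, show balMap A _ (f i) x = 0 from congrFun hx i, map_zero,
      Finsupp.zero_apply, eq_comm] at this
  rw [map_zero, Finsupp.zero_apply]
  exact (injective_iff_map_eq_zero _).mp hf _ (funext hfx)

theorem balMap_pi_injective_of_projective (D : Type*) [AddCommGroup D] [Module Aᵐᵒᵖ D]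
    [Module.Projective Aᵐᵒᵖ D] {X : Type*} [AddCommGroup X] [Module A X] {ι : Type*}
    {Y : ι → Type*} [∀ i, AddCommGroup (Y i)] [∀ i, Module A (Y i)] (f : ∀ i, X →ₗ[A] Y i)
    (hf : Function.Injective (LinearMap.pi f)) :
    Function.Injective (LinearMap.pi fun i => balMap A D (f i)) := by
  obtain ⟨s, hs⟩ := Module.Projective.out (R := Aᵐᵒᵖ) (P := D)
  have hcomm : ⇑(LinearMap.piMap fun i => balMapLeft A (Y i) s) ∘
      ⇑(LinearMap.pi fun i => balMap A D (f i)) =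
      ⇑(LinearMap.pi fun i => balMap A (D →₀ Aᵐᵒᵖ) (f i)) ∘ balMapLeft A X s := by
    ext x i
    exact (LinearMap.congr_fun (balMap_comp_balMapLeft A (f i) s) x).symm
  refine Function.Injective.of_comp (f := LinearMap.piMap fun i => balMapLeft A (Y i) s) ?_
  rw [hcomm]
  exact (balMap_pi_injective_of_free A D f hf).comp (balMapLeft_injective_of_leftInverse A hs)

end BalTensor

theorem coe_pi_bimodPiProj (k A : Type u) [CommRing k] [Ring A] [Algebra k A]
    (M : Type u) [AddCommGroup M] [Module k M] [Module A M] [IsScalarTower k A M]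
    {I : Type u} (F : I → Type u) [∀ i, AddCommGroup (F i)] [∀ i, Module k (F i)]
    [∀ i, Module Aᵐᵒᵖ (F i)] [∀ i, IsScalarTower k Aᵐᵒᵖ (F i)] :
    letI := bimoduleTensorModule k A M (∀ j, F j)
    letI := fun i => bimoduleTensorModule k A M (F i)
    ⇑(LinearMap.pi (bimodPiProj k A M F)) = ⇑(piRightHom k k M F) :=
  funext fun x => funext fun i => (LinearMap.congr_fun (proj_comp_piRightHom k F M i) x).symm

/-- Let `k` be a commutative noetherian ring and `A` a `k`-algebra which is flat over `k`.
For a left `A`-module `M`, a family `(Fᵢ)` of rank one free right `A`-modules and a projective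
`A ⊗[k] Aᵐᵒᵖ`-module `D` (regarded as a right module over the enveloping algebra), the
canonical morphism
`D ⊗_{A ⊗[k] Aᵐᵒᵖ} (M ⊗[k] ∏ᵢ Fᵢ) → ∏ᵢ (D ⊗_{A ⊗[k] Aᵐᵒᵖ} (M ⊗[k] Fᵢ))`
induced by the projections `∏ᵢ Fᵢ → Fᵢ` is injective. -/
theorem projective_tensor_pi_injective (k A : Type u) [CommRing k] [IsNoetherianRing k]
    [Ring A] [Algebra k A] [Module.Flat k A]
    (M : Type u) [AddCommGroup M] [Module k M] [Module A M] [IsScalarTower k A M]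
    (I : Type u) (F : I → Type u) [∀ i, AddCommGroup (F i)] [∀ i, Module k (F i)]
    [∀ i, Module Aᵐᵒᵖ (F i)] [∀ i, IsScalarTower k Aᵐᵒᵖ (F i)]
    (hF : ∀ i, Nonempty (F i ≃ₗ[Aᵐᵒᵖ] A))
    (D : Type u) [AddCommGroup D] [Module (A ⊗[k] Aᵐᵒᵖ)ᵐᵒᵖ D]
    [Module.Projective (A ⊗[k] Aᵐᵒᵖ)ᵐᵒᵖ D] :
    letI := bimoduleTensorModule k A M (∀ j, F j)
    letI := fun i => bimoduleTensorModule k A M (F i)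
    Function.Injective
      (LinearMap.pi fun i =>
        balMap (A ⊗[k] Aᵐᵒᵖ) D (bimodPiProj k A M F i) :
        BalTensor (A ⊗[k] Aᵐᵒᵖ) D (M ⊗[k] (∀ j, F j)) →ₗ[ℤ]
          ∀ i, BalTensor (A ⊗[k] Aᵐᵒᵖ) D (M ⊗[k] F i)) := by
  let _ := bimoduleTensorModule k A M (∀ j, F j)
  let _ := fun i => bimoduleTensorModule k A M (F i)
  have : ∀ i, Module.Flat k (F i) := fun i =>
    Module.Flat.of_linearEquiv ((hF i).some.restrictScalars k)
  refine balMap_pi_injective_of_projective (A ⊗[k] Aᵐᵒᵖ) D (bimodPiProj k A M F) ?_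
  rw [coe_pi_bimodPiProj]
  exact piRightHom_injective_of_flat k F M

end
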